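/- Inverse backstepping kernel verification: Let γ ∈ ℝ and define L : ℝ² → ℝ by L(x,y) = −γ·y·Σ_{m=0}^∞ ((−1)^m·(γ(x²−y²)/4)^m)/(2·m!·(m+1)!). Then L is infinitely differentiable, and: (i) L_xx(x,y) − L_yy(x,y) = −γ·L(x,y) for all (x,y); (ii) L(x,0) = 0 for all x; (iii) L(x,x) = −γ·x/2 for all x. -/

import Mathlib

/-- The inverse backstepping kernel
`L(x,y) = −γ y Σ_{m=0}^∞ ((−1)^m (γ(x²−y²)/4)^m)/(2 m! (m+1)!)`
(equal to `−yγ J₁(√(γ(x²−y²)))/√(γ(x²−y²))`). -/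
noncomputable def Lker (γ x y : ℝ) : ℝ :=
  -γ * y * ∑' m : ℕ,
    ((-1 : ℝ)^m * (γ * (x^2 - y^2) / 4)^m) / (2 * (m.factorial : ℝ) * ((m+1).factorial : ℝ))

open scoped ContDiff

/-! ### Auxiliary power series machinery -/

noncomputable def psum (b : ℕ → ℝ) (t : ℝ) : ℝ := ∑' m : ℕ, b m * t ^ m

def Dseq (b : ℕ → ℝ) : ℕ → ℝ := fun m => ((m : ℝ) + 1) * b (m + 1)

def decay (b : ℕ → ℝ) : Prop := ∃ C : ℝ, ∀ m : ℕ, |b m| ≤ C / m.factorial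

lemma decay.nonnegC {b : ℕ → ℝ} {C : ℝ} (hC : ∀ m : ℕ, |b m| ≤ C / m.factorial) : 0 ≤ C := by
  have := hC 0
  simp at this
  exact le_trans (abs_nonneg _) this

lemma decay.D {b : ℕ → ℝ} (hb : decay b) : decay (Dseq b) := by
  obtain ⟨C, hC⟩ := hb
  refine ⟨C, fun m => ?_⟩
  have h1 : |Dseq b m| = ((m : ℝ) + 1) * |b (m + 1)| := by
    rw [Dseq, abs_mul, abs_of_nonneg (by positivity)]
  rw [h1]
  have h3 : ((m + 1).factorial : ℝ) = ((m : ℝ) + 1) * m.factorial := by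
    rw [Nat.factorial_succ]; push_cast; ring
  have hfac : (m.factorial : ℝ) ≠ 0 := by positivity
  calc ((m : ℝ) + 1) * |b (m + 1)| ≤ ((m : ℝ) + 1) * (C / (m + 1).factorial) := by
        gcongr
        exact hC (m + 1)
    _ = C / m.factorial := by
        rw [h3]
        field_simp

lemma decay.summable {b : ℕ → ℝ} (hb : decay b) (t : ℝ) :
    Summable fun m : ℕ => b m * t ^ m := by
  obtain ⟨C, hC⟩ := hb
  refine Summable.of_norm_bounded
    ((Real.summable_pow_div_factorial |t|).mul_left C) (fun m => ?_)
  rw [norm_mul, norm_pow, Real.norm_eq_abs, Real.norm_eq_abs]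
  calc |b m| * |t| ^ m ≤ (C / m.factorial) * |t| ^ m :=
        mul_le_mul_of_nonneg_right (hC m) (by positivity)
    _ = C * (|t| ^ m / m.factorial) := by ring

lemma hasDerivAt_psum {b : ℕ → ℝ} (hb : decay b) (t₀ : ℝ) :
    HasDerivAt (psum b) (psum (Dseq b) t₀) t₀ := by
  obtain ⟨C, hC⟩ := hb
  have hC0 : 0 ≤ C := decay.nonnegC hC
  set R : ℝ := |t₀| + 1 with hR
  have hRpos : 0 < R := by positivity
  have ht₀ : t₀ ∈ Metric.ball (0 : ℝ) R := by
    simp only [Metric.mem_ball, Real.dist_eq, sub_zero, hR]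
    linarith [abs_nonneg t₀]
  have husum : Summable (fun n : ℕ => C * ((n : ℝ) * R ^ (n - 1) / n.factorial)) := by
    apply Summable.mul_left
    rw [← summable_nat_add_iff 1]
    apply (Real.summable_pow_div_factorial R).congr
    intro n
    rw [Nat.add_sub_cancel, Nat.factorial_succ]
    have h1 : (n.factorial : ℝ) ≠ 0 := by positivity
    push_cast
    field_simp
  have hbound : ∀ (n : ℕ) (y : ℝ), y ∈ Metric.ball (0 : ℝ) R →
      ‖b n * ((n : ℝ) * y ^ (n - 1))‖ ≤ C * ((n : ℝ) * R ^ (n - 1) / n.factorial) := by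
    intro n y hy
    have hyR : |y| ≤ R := by
      simp only [Metric.mem_ball, Real.dist_eq, sub_zero] at hy
      linarith
    rw [norm_mul, norm_mul, Real.norm_eq_abs, Real.norm_eq_abs, Real.norm_eq_abs,
      abs_pow, Nat.abs_cast]
    calc |b n| * ((n : ℝ) * |y| ^ (n - 1)) ≤ (C / n.factorial) * ((n : ℝ) * R ^ (n - 1)) :=
          mul_le_mul (hC n)
            (mul_le_mul_of_nonneg_left (pow_le_pow_left₀ (abs_nonneg y) hyR _) (by positivity))
            (by positivity) (by positivity)
      _ = C * ((n : ℝ) * R ^ (n - 1) / n.factorial) := by ring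
  have key : HasDerivAt (fun z => ∑' n : ℕ, b n * z ^ n)
      (∑' n : ℕ, b n * ((n : ℝ) * t₀ ^ (n - 1))) t₀ := by
    apply hasDerivAt_tsum_of_isPreconnected husum Metric.isOpen_ball
      (convex_ball (0:ℝ) R).isPreconnected
      (fun n y _ => (hasDerivAt_pow n y).const_mul (b n)) hbound ht₀ ?_ ht₀
    exact decay.summable ⟨C, hC⟩ t₀
  have hsum' : Summable (fun n : ℕ => b n * ((n : ℝ) * t₀ ^ (n - 1))) :=
    Summable.of_norm_bounded husum (fun n => hbound n t₀ ht₀)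
  have heq : (∑' n : ℕ, b n * ((n : ℝ) * t₀ ^ (n - 1))) = psum (Dseq b) t₀ := by
    rw [Summable.tsum_eq_zero_add hsum']
    simp only [Nat.cast_zero, zero_mul, mul_zero, zero_add]
    refine tsum_congr fun m => ?_
    rw [Nat.add_sub_cancel, Dseq]
    push_cast
    ring
  rw [← heq]
  exact key

lemma hasDerivAt_psum_comp {b : ℕ → ℝ} (hb : decay b) {g : ℝ → ℝ} {g' t : ℝ}
    (hg : HasDerivAt g g' t) :
    HasDerivAt (fun s => psum b (g s)) (psum (Dseq b) (g t) * g') t := by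
  simpa [Function.comp_def] using (hasDerivAt_psum hb (g t)).comp t hg

lemma analytic_psum {b : ℕ → ℝ} (hb : decay b) : AnalyticOnNhd ℝ (psum b) Set.univ := by
  set p := FormalMultilinearSeries.ofScalars ℝ b with hp
  have hr : (⊤ : ENNReal) ≤ p.radius := by
    apply ENNReal.le_of_forall_nnreal_lt
    intro r _
    apply FormalMultilinearSeries.le_radius_of_summable_norm
    apply ((hb.summable (r : ℝ)).abs).congr
    intro n
    rw [FormalMultilinearSeries.ofScalars_norm, abs_mul, abs_pow,
      abs_of_nonneg r.coe_nonneg, Real.norm_eq_abs]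
  have hsum : HasFPowerSeriesOnBall p.sum p 0 ⊤ := by
    have := p.hasFPowerSeriesOnBall (lt_of_lt_of_le ENNReal.zero_lt_top hr)
    exact this.mono ENNReal.zero_lt_top hr
  have hps : p.sum = psum b := by
    funext t
    refine tsum_congr fun n => ?_
    rw [hp, FormalMultilinearSeries.ofScalars_apply_eq, smul_eq_mul]
  rw [← hps]
  intro z _
  exact hsum.analyticAt_of_mem (by simpa [EMetric.mem_ball] using edist_lt_top z 0)

/-! ### The specific coefficient sequence -/

noncomputable def aseq : ℕ → ℝ :=
  fun m => (-1 : ℝ) ^ m / (2 * (m.factorial : ℝ) * ((m + 1).factorial : ℝ))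

lemma decay_aseq : decay aseq := by
  refine ⟨1, fun m => ?_⟩
  have h1 : (1 : ℝ) ≤ (m.factorial : ℝ) := by exact_mod_cast m.factorial_pos
  have h2 : (1 : ℝ) ≤ ((m + 1).factorial : ℝ) := by exact_mod_cast (m + 1).factorial_pos
  rw [aseq, abs_div, abs_pow, abs_neg, abs_one, one_pow,
    abs_of_nonneg (by positivity : (0:ℝ) ≤ 2 * (m.factorial : ℝ) * ((m + 1).factorial : ℝ))]
  rw [div_le_div_iff₀ (by positivity) (by positivity)]
  nlinarith

lemma Lker_eq (γ x y : ℝ) :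
    Lker γ x y = -γ * y * psum aseq (γ * (x ^ 2 - y ^ 2) / 4) := by
  rw [Lker, psum]
  congr 1
  refine tsum_congr fun m => ?_
  rw [aseq]
  ring

lemma coeff_key (m : ℕ) :
    Dseq (Dseq aseq) m + (2 * Dseq aseq (m + 1) + aseq (m + 1)) = 0 := by
  simp only [Dseq, aseq]
  have e1 : ((m + 1 + 1).factorial : ℝ) = ((m : ℝ) + 2) * ((m + 1).factorial : ℝ) := by
    rw [Nat.factorial_succ]; push_cast; ring
  have e2 : ((m + 1 + 1 + 1).factorial : ℝ)
      = ((m : ℝ) + 3) * ((m : ℝ) + 2) * ((m + 1).factorial : ℝ) := by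
    rw [Nat.factorial_succ, Nat.factorial_succ]; push_cast; ring
  have e3 : ((m + 1 + 1 + 1 : ℕ) : ℕ) = m + 3 := by ring
  have hf1 : ((m + 1).factorial : ℝ) ≠ 0 := by positivity
  have hp1 : (-1 : ℝ) ^ (m + 1 + 1) = (-1 : ℝ) ^ m := by
    rw [pow_succ, pow_succ]; ring
  have hp2 : (-1 : ℝ) ^ (m + 1) = -(-1 : ℝ) ^ m := by
    rw [pow_succ]; ring
  rw [e1, e2, hp1, hp2]
  push_cast
  field_simp
  ring

set_option maxHeartbeats 1000000 in
lemma ode_key (t : ℝ) :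
    t * psum (Dseq (Dseq aseq)) t + 2 * psum (Dseq aseq) t + psum aseq t = 0 := by
  have hs0 := decay_aseq.summable t
  have hs1 := decay_aseq.D.summable t
  have hs2 := decay_aseq.D.D.summable t
  have h1 : t * psum (Dseq (Dseq aseq)) t = ∑' m : ℕ, Dseq (Dseq aseq) m * t ^ (m + 1) := by
    rw [psum, ← tsum_mul_left]
    exact tsum_congr fun m => by ring
  have hsum_e : Summable (fun m : ℕ => (2 * Dseq aseq m + aseq m) * t ^ m) := by
    apply ((hs1.mul_left 2).add hs0).congr
    intro m; ring
  have h2 : 2 * psum (Dseq aseq) t + psum aseq t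
      = ∑' m : ℕ, (2 * Dseq aseq m + aseq m) * t ^ m := by
    rw [psum, psum, ← tsum_mul_left, ← Summable.tsum_add (hs1.mul_left 2) hs0]
    exact tsum_congr fun m => by ring
  have he0 : 2 * Dseq aseq 0 + aseq 0 = 0 := by
    norm_num [Dseq, aseq, Nat.factorial]
  have h3 : (∑' m : ℕ, (2 * Dseq aseq m + aseq m) * t ^ m)
      = ∑' m : ℕ, (2 * Dseq aseq (m + 1) + aseq (m + 1)) * t ^ (m + 1) := by
    rw [Summable.tsum_eq_zero_add hsum_e, he0]
    simp
  have h4 : Summable (fun m : ℕ => Dseq (Dseq aseq) m * t ^ (m + 1)) := by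
    apply (hs2.mul_right t).congr
    intro m
    rw [pow_succ]; ring
  have h5 : Summable (fun m : ℕ => (2 * Dseq aseq (m + 1) + aseq (m + 1)) * t ^ (m + 1)) :=
    (summable_nat_add_iff 1).mpr hsum_e
  have hz : (∑' m : ℕ, (Dseq (Dseq aseq) m * t ^ (m + 1)
      + (2 * Dseq aseq (m + 1) + aseq (m + 1)) * t ^ (m + 1))) = ∑' _ : ℕ, (0 : ℝ) :=
    tsum_congr fun m => by linear_combination t ^ (m + 1) * coeff_key m
  rw [add_assoc, h2, h1, h3, ← Summable.tsum_add h4 h5, hz, tsum_zero]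


/-- inverse backstepping kernel verification: `L` is smooth and satisfies
`L_xx − L_yy = −γ L`, `L(x,0) = 0` and `L(x,x) = −γx/2`. -/
theorem statement_12 (γ : ℝ) :
    ContDiff ℝ (⊤ : ℕ∞) (fun p : ℝ × ℝ => Lker γ p.1 p.2) ∧
    (∀ x y : ℝ,
      deriv (deriv (fun x' => Lker γ x' y)) x - deriv (deriv (fun y' => Lker γ x y')) y
        = -γ * Lker γ x y) ∧
    (∀ x : ℝ, Lker γ x 0 = 0) ∧
    (∀ x : ℝ, Lker γ x x = -γ * x / 2) := by
  have da0 := decay_aseq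
  have da1 := decay_aseq.D
  have da2 := decay_aseq.D.D
  refine ⟨?_, ?_, ?_, ?_⟩
  · -- smoothness
    have hfun : (fun p : ℝ × ℝ => Lker γ p.1 p.2)
        = fun p : ℝ × ℝ => -γ * p.2 * psum aseq (γ * (p.1 ^ 2 - p.2 ^ 2) / 4) :=
      funext fun p => Lker_eq γ p.1 p.2
    rw [hfun]
    refine ContDiff.of_le (n := ω) ?_ le_top
    rw [contDiff_omega_iff_analyticOnNhd]
    apply AnalyticOnNhd.mul
    · exact analyticOnNhd_const.mul analyticOnNhd_snd
    · have hinner : AnalyticOnNhd ℝ (fun p : ℝ × ℝ => γ * (p.1 ^ 2 - p.2 ^ 2) / 4)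
          Set.univ := by
        simp only [div_eq_mul_inv]
        exact (analyticOnNhd_const.mul
          ((analyticOnNhd_fst.pow 2).sub (analyticOnNhd_snd.pow 2))).mul analyticOnNhd_const
      have := (analytic_psum da0).comp hinner (Set.mapsTo_univ _ _)
      simpa [Function.comp_def] using this
  · -- the PDE
    intro x y
    have hxz : ∀ z : ℝ, HasDerivAt (fun x' : ℝ => γ * (x' ^ 2 - y ^ 2) / 4) (γ * z / 2) z := by
      intro z
      have h := (((hasDerivAt_pow 2 z).sub_const (y ^ 2)).const_mul γ).div_const 4
      refine h.congr_deriv ?_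
      norm_num
      ring
    have hyz : ∀ z : ℝ, HasDerivAt (fun y' : ℝ => γ * (x ^ 2 - y' ^ 2) / 4) (-(γ * z) / 2) z := by
      intro z
      have h := (((hasDerivAt_pow 2 z).const_sub (x ^ 2)).const_mul γ).div_const 4
      refine h.congr_deriv ?_
      norm_num
      ring
    have hx := hxz x
    have hy := hyz y
    have hL1 : (fun x' => Lker γ x' y)
        = fun x' => -γ * y * psum aseq (γ * (x' ^ 2 - y ^ 2) / 4) :=
      funext fun x' => Lker_eq γ x' y
    have hL2 : (fun y' => Lker γ x y')
        = fun y' => -γ * y' * psum aseq (γ * (x ^ 2 - y' ^ 2) / 4) :=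
      funext fun y' => Lker_eq γ x y'
    -- first derivative in x
    have hder1 : deriv (fun x' => Lker γ x' y)
        = fun x' => -γ * y * (psum (Dseq aseq) (γ * (x' ^ 2 - y ^ 2) / 4) * (γ * x' / 2)) := by
      funext z
      rw [hL1]
      exact (HasDerivAt.const_mul (-γ * y) (hasDerivAt_psum_comp da0 (hxz z))).deriv
    -- first derivative in y
    have hder2 : deriv (fun y' => Lker γ x y')
        = fun y' => -γ * 1 * psum aseq (γ * (x ^ 2 - y' ^ 2) / 4)
            + -γ * y' * (psum (Dseq aseq) (γ * (x ^ 2 - y' ^ 2) / 4) * (-(γ * y') / 2)) := by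
      funext z
      rw [hL2]
      have hP : HasDerivAt (fun y' : ℝ => -γ * y') (-γ * 1) z :=
        (hasDerivAt_id z).const_mul (-γ)
      exact (hP.mul (hasDerivAt_psum_comp da0 (hyz z))).deriv
    -- second derivative in x
    have hQx : HasDerivAt (fun x' : ℝ => γ * x' / 2) (γ * 1 / 2) x :=
      ((hasDerivAt_id x).const_mul γ).div_const 2
    have HX : HasDerivAt
        (fun x' => -γ * y * (psum (Dseq aseq) (γ * (x' ^ 2 - y ^ 2) / 4) * (γ * x' / 2)))
        (-γ * y * ((psum (Dseq (Dseq aseq)) (γ * (x ^ 2 - y ^ 2) / 4) * (γ * x / 2)) * (γ * x / 2)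
          + psum (Dseq aseq) (γ * (x ^ 2 - y ^ 2) / 4) * (γ * 1 / 2))) x :=
      HasDerivAt.const_mul (-γ * y) ((hasDerivAt_psum_comp da1 hx).mul hQx)
    -- second derivative in y
    have hQy : HasDerivAt (fun y' : ℝ => -(γ * y') / 2) (-(γ * 1) / 2) y :=
      (((hasDerivAt_id y).const_mul γ).neg).div_const 2
    have hPy : HasDerivAt (fun y' : ℝ => -γ * y') (-γ * 1) y :=
      (hasDerivAt_id y).const_mul (-γ)
    have HY : HasDerivAt
        (fun y' => -γ * 1 * psum aseq (γ * (x ^ 2 - y' ^ 2) / 4)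
          + -γ * y' * (psum (Dseq aseq) (γ * (x ^ 2 - y' ^ 2) / 4) * (-(γ * y') / 2)))
        (-γ * 1 * (psum (Dseq aseq) (γ * (x ^ 2 - y ^ 2) / 4) * (-(γ * y) / 2))
          + (-γ * 1 * (psum (Dseq aseq) (γ * (x ^ 2 - y ^ 2) / 4) * (-(γ * y) / 2))
            + -γ * y * ((psum (Dseq (Dseq aseq)) (γ * (x ^ 2 - y ^ 2) / 4) * (-(γ * y) / 2))
                * (-(γ * y) / 2)
              + psum (Dseq aseq) (γ * (x ^ 2 - y ^ 2) / 4) * (-(γ * 1) / 2)))) y :=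
      (HasDerivAt.const_mul (-γ * 1) (hasDerivAt_psum_comp da0 hy)).add
        (hPy.mul ((hasDerivAt_psum_comp da1 hy).mul hQy))
    have EX : deriv (deriv (fun x' => Lker γ x' y)) x
        = -γ * y * ((psum (Dseq (Dseq aseq)) (γ * (x ^ 2 - y ^ 2) / 4) * (γ * x / 2)) * (γ * x / 2)
          + psum (Dseq aseq) (γ * (x ^ 2 - y ^ 2) / 4) * (γ * 1 / 2)) := by
      rw [hder1]
      exact HX.deriv
    have EY : deriv (deriv (fun y' => Lker γ x y')) y
        = -γ * 1 * (psum (Dseq aseq) (γ * (x ^ 2 - y ^ 2) / 4) * (-(γ * y) / 2))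
          + (-γ * 1 * (psum (Dseq aseq) (γ * (x ^ 2 - y ^ 2) / 4) * (-(γ * y) / 2))
            + -γ * y * ((psum (Dseq (Dseq aseq)) (γ * (x ^ 2 - y ^ 2) / 4) * (-(γ * y) / 2))
                * (-(γ * y) / 2)
              + psum (Dseq aseq) (γ * (x ^ 2 - y ^ 2) / 4) * (-(γ * 1) / 2))) := by
      rw [hder2]
      exact HY.deriv
    rw [EX, EY, Lker_eq γ x y]
    have hode := ode_key (γ * (x ^ 2 - y ^ 2) / 4)
    linear_combination (-(γ ^ 2 * y)) * hode
  · -- boundary condition at y = 0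
    intro x
    simp [Lker]
  · -- diagonal condition
    intro x
    have h0 : γ * (x ^ 2 - x ^ 2) / 4 = 0 := by ring
    rw [Lker, h0]
    have hts : (∑' m : ℕ, ((-1 : ℝ) ^ m * (0 : ℝ) ^ m)
        / (2 * (m.factorial : ℝ) * ((m + 1).factorial : ℝ))) = 1 / 2 := by
      rw [tsum_eq_single 0]
      · norm_num [Nat.factorial]
      · intro m hm
        simp [zero_pow hm]
    rw [hts]
    ring
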